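/- Let d ≥ 1 be an integer, Γ ⊂ ℝ^d a subgroup (lattice), A^{(p)} : ℝ^d → ℝ^d continuous and Γ-periodic, A⁰ the linear map A⁰_j(x) := (1/2) ∑_k B⁰_{kj} x_k with B⁰ real antisymmetric, and A := A^{(p)} + A⁰. Let a : ℝ^d × ℝ^d → ℂ be continuous, Γ-periodic in its first variable (a(x+γ,ξ) = a(x,ξ) for all γ ∈ Γ), and rapidly decaying in ξ uniformly in x (for every N there is C_N with |a(x,ξ)| ≤ C_N (1+|ξ|²)^{−N/2}). Then for every bounded measurable w : ℝ^d → ℂ, every γ ∈ Γ and every x ∈ ℝ^d, (Op^A(a) w)(x−γ) = (Op^{A − A⁰(γ)}(a)(L_γ w))(x), where (L_γ w)(x) := w(x−γ). -/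
import Mathlib


open MeasureTheory
open scoped RealInnerProductSpace

/-- Circulation vector `Γ^A(x,y) := ∫₀¹ A((1−s)x + sy) ds`. -/
noncomputable def GammaA {d : ℕ} (A : EuclideanSpace ℝ (Fin d) → EuclideanSpace ℝ (Fin d))
    (x y : EuclideanSpace ℝ (Fin d)) : EuclideanSpace ℝ (Fin d) :=
  ∫ s in (0:ℝ)..1, A ((1 - s) • x + s • y)

/-- The magnetic pseudodifferential operator
`(Op^A(a)u)(x) := (2π)^{−d} ∫∫ e^{i⟨x−y, ξ+Γ^A(x,y)⟩} a((x+y)/2, ξ) u(y) dy dξ`. -/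
noncomputable def magOp {d : ℕ} (A : EuclideanSpace ℝ (Fin d) → EuclideanSpace ℝ (Fin d))
    (a : EuclideanSpace ℝ (Fin d) × EuclideanSpace ℝ (Fin d) → ℂ)
    (u : EuclideanSpace ℝ (Fin d) → ℂ) (x : EuclideanSpace ℝ (Fin d)) : ℂ :=
  (((2 * Real.pi) ^ d)⁻¹ : ℝ) •
    ∫ ξ : EuclideanSpace ℝ (Fin d), ∫ y : EuclideanSpace ℝ (Fin d),
      Complex.exp (Complex.I * ((⟪x - y, ξ + GammaA A x y⟫ : ℝ) : ℂ)) *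
        a ((2 : ℝ)⁻¹ • (x + y), ξ) * u y

/-- The linear vector potential `A⁰` of a constant magnetic field `B⁰`:
`A⁰_j(x) = (1/2) ∑_k B⁰_{kj} x_k`. -/
noncomputable def constFieldPotential {d : ℕ} (B : Matrix (Fin d) (Fin d) ℝ)
    (x : EuclideanSpace ℝ (Fin d)) : EuclideanSpace ℝ (Fin d) :=
  (EuclideanSpace.equiv (Fin d) ℝ).symm (fun j => (1 / 2) * ∑ k, B k j * x k)

theorem magOp_intertwines_translations {d : ℕ} (hd : 1 ≤ d)
    (Γ : AddSubgroup (EuclideanSpace ℝ (Fin d)))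
    (Ap : EuclideanSpace ℝ (Fin d) → EuclideanSpace ℝ (Fin d)) (hAp : Continuous Ap)
    (hper : ∀ x : EuclideanSpace ℝ (Fin d), ∀ γ ∈ Γ, Ap (x + γ) = Ap x)
    (B : Matrix (Fin d) (Fin d) ℝ) (hB : ∀ j k, B j k = -B k j)
    (a : EuclideanSpace ℝ (Fin d) × EuclideanSpace ℝ (Fin d) → ℂ) (ha : Continuous a)
    (haper : ∀ γ ∈ Γ, ∀ x ξ : EuclideanSpace ℝ (Fin d), a (x + γ, ξ) = a (x, ξ))
    (hadec : ∀ N : ℕ, ∃ C : ℝ, ∀ x ξ : EuclideanSpace ℝ (Fin d),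
      ‖a (x, ξ)‖ ≤ C * (1 + ‖ξ‖ ^ 2) ^ (-(N : ℝ) / 2))
    (w : EuclideanSpace ℝ (Fin d) → ℂ) (hw : Measurable w)
    (C : ℝ) (hwb : ∀ y, ‖w y‖ ≤ C)
    (γ : EuclideanSpace ℝ (Fin d)) (hγ : γ ∈ Γ) (x : EuclideanSpace ℝ (Fin d)) :
    magOp (fun z => Ap z + constFieldPotential B z) a w (x - γ) =
      magOp (fun z => Ap z + constFieldPotential B z - constFieldPotential B γ) a
        (fun y => w (y - γ)) x := by
  have potlin : ∀ z : EuclideanSpace ℝ (Fin d),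
      constFieldPotential B (z - γ) = constFieldPotential B z - constFieldPotential B γ := by
    intro z
    unfold constFieldPotential
    ext j
    simp [mul_sub, Finset.sum_sub_distrib, mul_sub]
  have hAshift : ∀ z : EuclideanSpace ℝ (Fin d),
      Ap (z - γ) + constFieldPotential B (z - γ) =
        Ap z + constFieldPotential B z - constFieldPotential B γ := by
    intro z
    have h1 : Ap (z - γ) = Ap z := by
      have h := hper (z - γ) γ hγ
      simp only [sub_add_cancel] at h
      exact h.symm
    rw [h1, potlin z]
    abel
  unfold magOp
  congr 1
  congr 1
  funext ξ
  rw [← MeasureTheory.integral_add_right_eq_self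
    (fun y => Complex.exp (Complex.I * ((⟪x - y, ξ + GammaA
        (fun z => Ap z + constFieldPotential B z - constFieldPotential B γ) x y⟫ : ℝ) : ℂ)) *
      a ((2 : ℝ)⁻¹ • (x + y), ξ) * (fun y => w (y - γ)) y) γ]
  congr 1
  funext y
  simp only
  have h1 : x - γ - y = x - (y + γ) := by abel
  have h2 : GammaA (fun z => Ap z + constFieldPotential B z) (x - γ) y =
      GammaA (fun z => Ap z + constFieldPotential B z - constFieldPotential B γ) x (y + γ) := by
    unfold GammaA
    apply intervalIntegral.integral_congr
    intro s _
    have harg : (1 - s) • (x - γ) + s • y = ((1 - s) • x + s • (y + γ)) - γ := by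
      module
    beta_reduce
    rw [harg, hAshift]
  have h3 : a ((2 : ℝ)⁻¹ • (x - γ + y), ξ) = a ((2 : ℝ)⁻¹ • (x + (y + γ)), ξ) := by
    have harg : (2 : ℝ)⁻¹ • (x + (y + γ)) = (2 : ℝ)⁻¹ • (x - γ + y) + γ := by
      module
    rw [harg, haper γ hγ]
  rw [h1, h2, h3, add_sub_cancel_right]
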